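/- Let β₁, β₂ > 0 be real numbers satisfying 2ν₀(β₁ + β₂ν₁) ≥ π, where ν₀ = √(1 − sin²1) and ν₁ = −sin 2/(1 + cos 2). Let p be analytic on the open unit disk 𝔻 with p(0) = 1, and suppose that for every z ∈ 𝔻 the value 1 + β₁·z·p′(z) + β₂·z²·p″(z) lies in the set {1 + log(w + (1 + w²)^{1/2}) : w ∈ 𝔻} (principal branches of log and square root, i.e. the image of 𝔻 under 1 + sinh⁻¹ z). Then for every z ∈ 𝔻, p(z) ∈ {1 + sin w : w ∈ 𝔻}, i.e. p(z) ≺ 1 + sin z. -/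

import Mathlib

open Metric

noncomputable def nu0 : ℝ := Real.sqrt (1 - Real.sin 1 ^ 2)

noncomputable def nu1 : ℝ := -Real.sin 2 / (1 + Real.cos 2)

/-!
Put `G = β₁ p' + β₂ z p''`. The hypothesis places `z G(z)` in `sinh⁻¹(𝔻)`, which lies in the closed
disk of radius `2`: for `ζ = w + √(1 + w²)` one has `Re ζ ≥ 0` and `ζ⁻¹ = √(1 + w²) - w`, so
`|log |ζ|| ≤ log (5/2) < 1` and `|arg ζ| ≤ π/2`. Schwarz's lemma then gives `|G| ≤ 2` on `𝔻`.
With `q = β₁ / β₂`, the function `s ↦ s^q p'(s z)` vanishes at `0` and has derivative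
`s^(q-1) G(s z) / β₂`, so integrating over `[0, 1]` yields `|p'| ≤ 2 / β₁`, hence
`|p z - 1| < 2 / β₁`. Since `ν₁ ≤ 0` and `ν₀ = cos 1`, the condition on `β₁, β₂` forces
`2 / β₁ < sin 1`. Finally `sin` is an open map with `|sin w| ≥ sin |w|`, so `sin(𝔻)` contains
the disk of radius `sin 1`.
-/

open Set MeasureTheory

theorem norm_sub_le_of_norm_deriv_le_rpow {E : Type*} [NormedAddCommGroup E] [NormedSpace ℝ E]
    [CompleteSpace E] {φ : ℝ → E} {q K : ℝ} (hq : 0 < q) (hφ : ContinuousOn φ (Icc 0 1))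
    (hdiff : ∀ s ∈ Ioc (0 : ℝ) 1, DifferentiableAt ℝ φ s)
    (hbound : ∀ s ∈ Ioc (0 : ℝ) 1, ‖deriv φ s‖ ≤ K * s ^ (q - 1)) :
    ‖φ 1 - φ 0‖ ≤ K / q := by
  have hmajorant : IntervalIntegrable (fun s : ℝ => K * s ^ (q - 1)) volume 0 1 :=
    (intervalIntegral.intervalIntegrable_rpow' (by linarith)).const_mul K
  have hbound_ae : ∀ᵐ s, s ∈ Ioc (0 : ℝ) 1 → ‖deriv φ s‖ ≤ K * s ^ (q - 1) :=
    Filter.Eventually.of_forall hbound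
  have hint : IntervalIntegrable (deriv φ) volume 0 1 := by
    refine hmajorant.mono_fun (stronglyMeasurable_deriv φ).aestronglyMeasurable ?_
    rw [uIoc_of_le zero_le_one]
    filter_upwards [ae_restrict_mem measurableSet_Ioc] with s hs
    exact (hbound s hs).trans (le_abs_self _)
  rw [← intervalIntegral.integral_eq_sub_of_hasDerivAt_of_le zero_le_one hφ
    (fun s hs => (hdiff s (Ioo_subset_Ioc_self hs)).hasDerivAt) hint]
  calc ‖∫ s in (0 : ℝ)..1, deriv φ s‖ ≤ ∫ s in (0 : ℝ)..1, K * s ^ (q - 1) :=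
        intervalIntegral.norm_integral_le_of_norm_le zero_le_one hbound_ae hmajorant
    _ = K / q := by
        rw [intervalIntegral.integral_const_mul, integral_rpow (Or.inl (by linarith)),
          sub_add_cancel, Real.one_rpow, Real.zero_rpow hq.ne', sub_zero, mul_one_div]

theorem ofReal_mul_mem_ball {R : ℝ} {z : ℂ} (hz : z ∈ ball (0 : ℂ) R) {s : ℝ}
    (hs : s ∈ Icc (0 : ℝ) 1) : (s : ℂ) * z ∈ ball (0 : ℂ) R := by
  rw [← Complex.real_smul]
  exact (convex_ball 0 R).smul_mem_of_zero_mem (mem_ball_self (nonempty_ball.1 ⟨z, hz⟩)) hz hs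

theorem norm_le_of_norm_add_mul_deriv_le {f : ℂ → ℂ} {R a b M : ℝ} (ha : 0 < a) (hb : 0 < b)
    (hf : DifferentiableOn ℂ f (ball 0 R))
    (hM : ∀ u ∈ ball (0 : ℂ) R, ‖a * f u + b * u * deriv f u‖ ≤ M) {z : ℂ}
    (hz : z ∈ ball (0 : ℂ) R) : ‖f z‖ ≤ M / a := by
  set q := a / b with hq_def
  have hq : 0 < q := div_pos ha hb
  have hf' : ∀ s ∈ Icc (0 : ℝ) 1, DifferentiableAt ℂ f (s * z) := fun s hs =>
    hf.differentiableAt (isOpen_ball.mem_nhds (ofReal_mul_mem_ball hz hs))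
  set φ : ℝ → ℂ := fun s => (s ^ q : ℝ) * f (s * z)
  have hφ_deriv : ∀ s ∈ Ioc (0 : ℝ) 1, HasDerivAt φ
      (((s ^ (q - 1) / b : ℝ) : ℂ) * (a * f (s * z) + b * (s * z) * deriv f (s * z))) s := by
    intro s hs
    have hpow : HasDerivAt (fun s : ℝ => ((s ^ q : ℝ) : ℂ)) ((q * s ^ (q - 1) : ℝ) : ℂ) s :=
      (Real.hasDerivAt_rpow_const (Or.inl hs.1.ne')).ofReal_comp
    have hcomp : HasDerivAt (fun s : ℝ => f (s * z)) (deriv f (s * z) * z) s := by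
      simpa using ((hf' s (Ioc_subset_Icc_self hs)).hasDerivAt.comp (s : ℂ)
        (hasDerivAt_mul_const z)).comp_ofReal
    refine (hpow.mul hcomp).congr_deriv ?_
    have hs_pow : s ^ q = s ^ (q - 1) * s := by
      rw [← Real.rpow_add_one hs.1.ne']; ring_nf
    have hqb : (q : ℂ) * b = a := by exact_mod_cast div_mul_cancel₀ a hb.ne'
    rw [hs_pow]
    push_cast
    generalize ((s ^ (q - 1) : ℝ) : ℂ) = t
    have hb' : (b : ℂ) ≠ 0 := by exact_mod_cast hb.ne'
    rw [← hqb]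
    field_simp
  have hφ_cont : ContinuousOn φ (Icc 0 1) := by
    refine (Complex.continuous_ofReal.comp_continuousOn ?_).mul ?_
    · exact (Real.continuous_rpow_const hq.le).continuousOn
    · exact hf.continuousOn.comp (by fun_prop : Continuous fun s : ℝ => (s : ℂ) * z).continuousOn
        (fun s hs => ofReal_mul_mem_ball hz hs)
  have hφ_deriv_le : ∀ s ∈ Ioc (0 : ℝ) 1, ‖deriv φ s‖ ≤ M / b * s ^ (q - 1) := by
    intro s hs
    have hcoeff : 0 ≤ s ^ (q - 1) / b := by have := hs.1; positivity
    rw [(hφ_deriv s hs).deriv, norm_mul, Complex.norm_real, Real.norm_of_nonneg hcoeff]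
    calc s ^ (q - 1) / b * ‖a * f (s * z) + b * (s * z) * deriv f (s * z)‖
        ≤ s ^ (q - 1) / b * M :=
          mul_le_mul_of_nonneg_left (hM _ (ofReal_mul_mem_ball hz (Ioc_subset_Icc_self hs))) hcoeff
      _ = M / b * s ^ (q - 1) := by ring
  have hK : M / b / q = M / a := by rw [hq_def]; field_simp
  simpa [φ, Real.zero_rpow hq.ne', hK] using norm_sub_le_of_norm_deriv_le_rpow hq hφ_cont
    (fun s hs => (hφ_deriv s hs).differentiableAt) hφ_deriv_le

theorem norm_le_of_norm_mul_le {G : ℂ → ℂ} {R M : ℝ} (hG : DifferentiableOn ℂ G (ball 0 R))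
    (hM : ∀ u ∈ ball (0 : ℂ) R, ‖u * G u‖ ≤ M) {u : ℂ} (hu : u ∈ ball (0 : ℂ) R) :
    ‖G u‖ ≤ M / R := by
  have hmaps : MapsTo (fun v => v * G v) (ball 0 R) (closedBall ((0 : ℂ) * G 0) M) := by
    intro v hv
    simpa using hM v hv
  have hdslope : dslope (fun v => v * G v) 0 u = G u := by
    rcases eq_or_ne u 0 with rfl | hne
    · have hG0 := (hG.differentiableAt (isOpen_ball.mem_nhds hu)).hasDerivAt
      rw [dslope_same, ((hasDerivAt_id' (0 : ℂ)).fun_mul hG0).deriv]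
      simp
    · simpa using dslope_sub_smul_of_ne G hne
  simpa [hdslope] using
    Complex.norm_dslope_le_div_of_mapsTo_ball (differentiableOn_id.fun_mul hG) hmaps hu

theorem abs_re_le_re_cpow_inv_two_one_add_sq {w : ℂ} (hw : ‖w‖ ≤ 1) :
    |w.re| ≤ ((1 + w ^ 2) ^ (2⁻¹ : ℂ)).re := by
  rw [Complex.cpow_inv_two_re, ← Real.sqrt_sq_eq_abs]
  refine Real.sqrt_le_sqrt ?_
  have hnorm : ‖w‖ ^ 2 = w.re ^ 2 + w.im ^ 2 := by
    rw [Complex.sq_norm, Complex.normSq_apply]; ring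
  have hre : (1 + w ^ 2).re = 1 + w.re ^ 2 - w.im ^ 2 := by simp [sq]; ring
  nlinarith [norm_nonneg (1 + w ^ 2), norm_nonneg w]

theorem norm_cpow_inv_two_one_add_sq_le {w : ℂ} (hw : ‖w‖ ≤ 1) :
    ‖(1 + w ^ 2) ^ (2⁻¹ : ℂ)‖ ≤ 3 / 2 := by
  have hsq : ‖(1 + w ^ 2) ^ (2⁻¹ : ℂ)‖ ^ 2 ≤ 2 := by
    rw [← norm_pow, Complex.cpow_ofNat_inv_pow]
    calc ‖1 + w ^ 2‖ ≤ 1 + ‖w‖ ^ 2 := (norm_add_le _ _).trans_eq (by rw [norm_one, norm_pow])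
      _ ≤ 2 := by nlinarith [norm_nonneg w]
  nlinarith [norm_nonneg ((1 + w ^ 2) ^ (2⁻¹ : ℂ))]

theorem norm_log_le_two_of_re_nonneg {ζ : ℂ} (hre : 0 ≤ ζ.re) (hlog : |Real.log ‖ζ‖| ≤ 1) :
    ‖Complex.log ζ‖ ≤ 2 := by
  have harg : |Complex.arg ζ| ≤ Real.pi / 2 := Complex.abs_arg_le_pi_div_two_iff.2 hre
  have hsq : ‖Complex.log ζ‖ ^ 2 = Real.log ‖ζ‖ ^ 2 + Complex.arg ζ ^ 2 := by
    rw [Complex.sq_norm, Complex.normSq_apply, Complex.log_re, Complex.log_im]; ring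
  have hpi : Real.pi < 3.15 := Real.pi_lt_d2
  nlinarith [sq_abs (Real.log ‖ζ‖), sq_abs (Complex.arg ζ), abs_nonneg (Real.log ‖ζ‖),
    abs_nonneg (Complex.arg ζ), norm_nonneg (Complex.log ζ), Real.pi_pos]

theorem norm_log_add_cpow_one_add_sq_le_two {w : ℂ} (hw : ‖w‖ ≤ 1) :
    ‖Complex.log (w + (1 + w ^ 2) ^ ((1 : ℂ) / 2))‖ ≤ 2 := by
  have hre := abs_re_le_re_cpow_inv_two_one_add_sq hw
  have ht := norm_cpow_inv_two_one_add_sq_le hw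
  rw [one_div]
  set t := (1 + w ^ 2) ^ (2⁻¹ : ℂ)
  have hinv : (w + t) * (t - w) = 1 := by
    have : t ^ 2 = 1 + w ^ 2 := Complex.cpow_ofNat_inv_pow _ 2
    linear_combination this
  have hlog_add : Real.log ‖w + t‖ + Real.log ‖t - w‖ = 0 := by
    rw [← Real.log_mul (norm_ne_zero_iff.2 (left_ne_zero_of_mul_eq_one hinv))
      (norm_ne_zero_iff.2 (right_ne_zero_of_mul_eq_one hinv)), ← norm_mul, hinv, norm_one,
      Real.log_one]
  have hlog_le : ∀ v : ℂ, ‖v‖ ≤ 1 → v + t ≠ 0 → Real.log ‖v + t‖ ≤ 1 := by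
    intro v hv hne
    rw [Real.log_le_iff_le_exp (norm_pos_iff.2 hne)]
    linarith [norm_add_le v t, Real.exp_one_gt_d9]
  have h₁ := hlog_le w hw (left_ne_zero_of_mul_eq_one hinv)
  have h₂ := hlog_le (-w) (by simpa using hw)
    (by simpa [neg_add_eq_sub] using right_ne_zero_of_mul_eq_one hinv)
  rw [neg_add_eq_sub] at h₂
  refine norm_log_le_two_of_re_nonneg ?_ (abs_le.2 ⟨by linarith, h₁⟩)
  simp only [Complex.add_re]
  linarith [neg_abs_le w.re]

theorem DiffContOnCl.ball_subset_image_ball {f : ℂ → ℂ} {c : ℂ} {r m : ℝ}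
    (hf : DiffContOnCl ℂ f (ball c r)) (hr : 0 < r)
    (hm : ∀ w ∈ sphere c r, m ≤ ‖f w - f c‖) : ball (f c) m ⊆ f '' ball c r := by
  intro v hv
  have hm_pos : 0 < m := pos_of_mem_ball hv
  rcases (hf.differentiableOn.analyticOnNhd isOpen_ball).is_constant_or_isOpen
    (convex_ball c r).isPreconnected with ⟨v₀, hconst⟩ | hopen
  · exfalso
    obtain ⟨w, hw⟩ : (sphere c r).Nonempty := NormedSpace.sphere_nonempty.2 hr.le
    have heq : EqOn f (fun _ => v₀) (closedBall c r) :=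
      Set.EqOn.of_subset_closure (g := fun _ => v₀) hconst
        (closure_ball c hr.ne' ▸ hf.continuousOn) continuousOn_const ball_subset_closedBall
        (closure_ball c hr.ne').ge
    have := hm w hw
    rw [heq (sphere_subset_closedBall hw), heq (mem_closedBall_self hr.le), sub_self,
      norm_zero] at this
    linarith
  -- the image of the open disk is open, and it is relatively closed in `ball (f c) m`
  -- because its boundary values stay outside that ball
  have hclosed : IsClosed (f '' closedBall c r) :=
    ((isCompact_closedBall c r).image_of_continuousOn
      (closure_ball c hr.ne' ▸ hf.continuousOn)).isClosed
  refine (convex_ball (f c) m).isPreconnected.subset_left_of_subset_union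
    (hopen _ Subset.rfl isOpen_ball) hclosed.isOpen_compl ?_ ?_
    ⟨f c, mem_ball_self hm_pos, mem_image_of_mem f (mem_ball_self hr)⟩ hv
  · exact disjoint_compl_right_iff_subset.2 (image_mono ball_subset_closedBall)
  · rintro u hu
    by_cases hmem : u ∈ f '' closedBall c r
    · obtain ⟨w, hw, rfl⟩ := hmem
      left
      refine ⟨w, ?_, rfl⟩
      rcases (mem_closedBall.1 hw).lt_or_eq with hlt | heq
      · exact hlt
      · have := hm w (mem_sphere.2 heq)
        rw [mem_ball, dist_eq_norm] at hu
        linarith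
    · exact Or.inr hmem

theorem sin_sq_sub_sin_sq_le {a r : ℝ} (ha : 0 ≤ a) (har : a ≤ r) (hr : r ≤ Real.pi) :
    Real.sin r ^ 2 - Real.sin a ^ 2 ≤ r ^ 2 - a ^ 2 := by
  have hsub : Real.sin r - Real.sin a ≤ r - a :=
    (le_abs_self _).trans ((Real.abs_sin_sub_sin_le r a).trans_eq (abs_of_nonneg (by linarith)))
  have hsin_a := Real.sin_nonneg_of_nonneg_of_le_pi ha (har.trans hr)
  have hsin_r := Real.sin_nonneg_of_nonneg_of_le_pi (ha.trans har) hr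
  nlinarith [Real.sin_le ha, Real.sin_le (ha.trans har)]

theorem Complex.sin_norm_le_norm_sin {w : ℂ} (hw : ‖w‖ ≤ Real.pi) :
    Real.sin ‖w‖ ≤ ‖Complex.sin w‖ := by
  have hnorm_sin : ‖Complex.sin w‖ ^ 2 = Real.sin w.re ^ 2 + Real.sinh w.im ^ 2 := by
    rw [Complex.sin_eq, Complex.sq_norm, Complex.normSq_apply]
    simp [← Complex.ofReal_sin, ← Complex.ofReal_cos, ← Complex.ofReal_sinh,
      ← Complex.ofReal_cosh]
    nlinarith [Real.sin_sq_add_cos_sq w.re, Real.cosh_sq w.im]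
  have hnorm : ‖w‖ ^ 2 = |w.re| ^ 2 + w.im ^ 2 := by
    rw [Complex.sq_norm, Complex.normSq_apply, sq_abs]; ring
  have hsinh : w.im ^ 2 ≤ Real.sinh w.im ^ 2 := by
    rw [← sq_abs w.im, ← sq_abs (Real.sinh w.im), Real.abs_sinh]
    exact pow_le_pow_left₀ (abs_nonneg _) (Real.self_le_sinh_iff.2 (abs_nonneg _)) 2
  have hsin_abs : Real.sin |w.re| ^ 2 = Real.sin w.re ^ 2 := by
    rcases abs_choice w.re with h | h <;> simp [h]
  have hre_le : |w.re| ≤ ‖w‖ := Complex.abs_re_le_norm w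
  have key := sin_sq_sub_sin_sq_le (abs_nonneg w.re) hre_le hw
  refine (pow_le_pow_iff_left₀ (Real.sin_nonneg_of_nonneg_of_le_pi (norm_nonneg w) hw)
    (norm_nonneg _) two_ne_zero).1 ?_
  nlinarith

theorem ball_sin_one_subset_image_sin : ball (0 : ℂ) (Real.sin 1) ⊆ Complex.sin '' ball 0 1 := by
  have h := Complex.differentiable_sin.diffContOnCl.ball_subset_image_ball (c := 0) one_pos
    (m := Real.sin 1) fun w hw => by
      rw [mem_sphere_zero_iff_norm] at hw
      simpa [hw] using Complex.sin_norm_le_norm_sin (hw.trans_le (by linarith [Real.pi_gt_three]))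
  simpa using h

theorem nu0_eq_cos_one : nu0 = Real.cos 1 := by
  rw [nu0, ← Real.cos_sq', Real.sqrt_sq Real.cos_one_pos.le]

theorem nu1_nonpos : nu1 ≤ 0 :=
  div_nonpos_of_nonpos_of_nonneg
    (neg_nonpos.2 (Real.sin_nonneg_of_nonneg_of_le_pi zero_le_two (by linarith [Real.pi_gt_three])))
    (by linarith [Real.neg_one_le_cos 2])

theorem two_div_lt_sin_one {β₁ β₂ : ℝ} (hβ₂ : 0 < β₂)
    (hcond : 2 * (nu0 * (β₁ + β₂ * nu1)) ≥ Real.pi) : 2 / β₁ < Real.sin 1 := by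
  rw [nu0_eq_cos_one] at hcond
  have hcos_pos := Real.cos_one_pos
  have hsin : 5 / 6 < Real.sin 1 := by
    have := Real.sin_gt_sub_cube (x := 1) one_pos
    norm_num at this
    exact this
  have hβ₁ : 3 / 2 < β₁ * Real.cos 1 := by
    nlinarith [Real.pi_gt_three, mul_nonpos_of_nonneg_of_nonpos hβ₂.le nu1_nonpos]
  have hβ₁_pos : 0 < β₁ := by nlinarith
  rw [div_lt_iff₀ hβ₁_pos]
  nlinarith [Real.cos_one_le]

theorem stmt5 (β₁ β₂ : ℝ) (hβ₁ : 0 < β₁) (hβ₂ : 0 < β₂)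
    (hcond : 2 * (nu0 * (β₁ + β₂ * nu1)) ≥ Real.pi)
    (p : ℂ → ℂ) (hp : AnalyticOnNhd ℂ p (ball 0 1)) (hp0 : p 0 = 1)
    (hsub : ∀ z ∈ ball (0 : ℂ) 1,
      ∃ w ∈ ball (0 : ℂ) 1, (1 + (β₁ : ℂ) * z * deriv p z + (β₂ : ℂ) * z ^ 2 * deriv (deriv p) z) = 1 + Complex.log (w + (1 + w ^ 2) ^ ((1 : ℂ) / 2))) :
    ∀ z ∈ ball (0 : ℂ) 1, ∃ w ∈ ball (0 : ℂ) 1, p z = 1 + Complex.sin w := by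
  intro z hz
  set G : ℂ → ℂ := fun u => β₁ * deriv p u + β₂ * u * deriv (deriv p) u
  have hG : ∀ u ∈ ball (0 : ℂ) 1, ‖u * G u‖ ≤ 2 := by
    intro u hu
    obtain ⟨w, hw, hwu⟩ := hsub u hu
    rw [show u * G u = Complex.log (w + (1 + w ^ 2) ^ ((1 : ℂ) / 2)) by linear_combination hwu]
    exact norm_log_add_cpow_one_add_sq_le_two (mem_ball_zero_iff.1 hw).le
  have hG_diff : DifferentiableOn ℂ G (ball 0 1) :=
    (hp.deriv.differentiableOn.const_mul _).add
      ((differentiableOn_id.const_mul _).mul hp.deriv.deriv.differentiableOn)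
  have hderiv : ∀ u ∈ ball (0 : ℂ) 1, ‖deriv p u‖ ≤ 2 / β₁ := fun u hu =>
    norm_le_of_norm_add_mul_deriv_le hβ₁ hβ₂ hp.deriv.differentiableOn
      (fun v hv => by simpa using norm_le_of_norm_mul_le hG_diff hG hv) hu
  have hlip := (convex_ball (0 : ℂ) 1).norm_image_sub_le_of_norm_deriv_le
    (fun u hu => hp.differentiableOn.differentiableAt (isOpen_ball.mem_nhds hu)) hderiv
    (mem_ball_self one_pos) hz
  have hsmall : ‖p z - 1‖ < Real.sin 1 := by
    rw [hp0, sub_zero] at hlip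
    calc ‖p z - 1‖ ≤ 2 / β₁ * ‖z‖ := hlip
      _ ≤ 2 / β₁ := mul_le_of_le_one_right (by positivity) (mem_ball_zero_iff.1 hz).le
      _ < Real.sin 1 := two_div_lt_sin_one hβ₂ hcond
  obtain ⟨w, hw, hsin⟩ := ball_sin_one_subset_image_sin (mem_ball_zero_iff.2 hsmall)
  exact ⟨w, hw, by rw [hsin]; ring⟩
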